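/- Set λ1 = (h1+h2+h3+h4−l1−l2−l3−l4+3)/2. Then d²⁻⁻(λ1) = 0, d²⁻⁻(λ1+1) = 0, and d²⁻(λ1) = 0. Consequently λ1 and λ1+1 are the exponents of the equation (A² − E)g = 0 at the regular singularity x = 0, and this singularity is apparent (non-logarithmic). -/

import Mathlib

noncomputable def qp (q r : ℝ) : ℂ := ((q ^ r : ℝ) : ℂ)

noncomputable def d2m (q h1 h2 h3 h4 l1 l2 l3 l4 : ℝ) (t1 t2 t3 t4 : ℂ) (μ : ℝ) : ℂ :=
  t1 * t2 * t3 * t4 *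
    ((qp q ((h1 + h2 + h3 + h4 + l1 + l2 + l3 + l4) / 2) * (qp q (-h1) + qp q (-l1))
        - qp q (h1 + h2 + h3 + h4 + 3/2 - μ) * qp q (-h1)
        - qp q (l1 + l2 + l3 + l4 - 3/2 + μ) * qp q (-l1)) * t1⁻¹
      + (qp q ((h1 + h2 + h3 + h4 + l1 + l2 + l3 + l4) / 2) * (qp q (-h2) + qp q (-l2))
        - qp q (h1 + h2 + h3 + h4 + 3/2 - μ) * qp q (-h2)
        - qp q (l1 + l2 + l3 + l4 - 3/2 + μ) * qp q (-l2)) * t2⁻¹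
      + (qp q ((h1 + h2 + h3 + h4 + l1 + l2 + l3 + l4) / 2) * (qp q (-h3) + qp q (-l3))
        - qp q (h1 + h2 + h3 + h4 + 3/2 - μ) * qp q (-h3)
        - qp q (l1 + l2 + l3 + l4 - 3/2 + μ) * qp q (-l3)) * t3⁻¹
      + (qp q ((h1 + h2 + h3 + h4 + l1 + l2 + l3 + l4) / 2) * (qp q (-h4) + qp q (-l4))
        - qp q (h1 + h2 + h3 + h4 + 3/2 - μ) * qp q (-h4)
        - qp q (l1 + l2 + l3 + l4 - 3/2 + μ) * qp q (-l4)) * t4⁻¹)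

noncomputable def d2mm (q h1 h2 h3 h4 l1 l2 l3 l4 : ℝ) (t1 t2 t3 t4 : ℂ) (μ : ℝ) : ℂ :=
  (qp q (h1 + h2 + h3 + h4 + 2 - μ) + qp q (l1 + l2 + l3 + l4 - 2 + μ)
      - qp q ((h1 + h2 + h3 + h4 + l1 + l2 + l3 + l4) / 2) * (qp q (1/2) + qp q (-(1/2))))
    * t1 * t2 * t3 * t4

/-!
Write `H = h1 + h2 + h3 + h4`, `L = l1 + l2 + l3 + l4`, `S = H + L`. The two exponents of `q` in
`d²⁻⁻(μ)` add up to `S`, so by `q^(a + 1/2) + q^(a - 1/2) = q^a (q^(1/2) + q^(-1/2))` it vanishes as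
soon as they are `S/2 ± 1/2`, which happens at `μ = λ1` and `μ = λ1 + 1`. At `μ = λ1` both exponents
in `d²⁻(μ)` equal `S/2`, and each of its four brackets cancels.
-/

theorem qp_add {q : ℝ} (hq : 0 < q) (r s : ℝ) : qp q (r + s) = qp q r * qp q s := by
  simp only [qp, Real.rpow_add hq, Complex.ofReal_mul]

theorem qp_add_qp_two_mul_sub {q : ℝ} (hq : 0 < q) {a x : ℝ} (hx : x = a + 1/2 ∨ x = a - 1/2) :
    qp q x + qp q (2 * a - x) = qp q a * (qp q (1/2) + qp q (-(1/2))) := by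
  rcases hx with rfl | rfl
  · rw [show 2 * a - (a + 1/2) = a + -(1/2) by ring, qp_add hq, qp_add hq]
    ring
  · rw [show 2 * a - (a - 1/2) = a + 1/2 by ring, sub_eq_add_neg, qp_add hq, qp_add hq]
    ring

section

variable {q h1 h2 h3 h4 l1 l2 l3 l4 : ℝ} {t1 t2 t3 t4 : ℂ}

theorem d2mm_eq_zero_of_exponent {μ : ℝ} (hq : 0 < q)
    (hμ : h1 + h2 + h3 + h4 + 2 - μ = (h1 + h2 + h3 + h4 + l1 + l2 + l3 + l4) / 2 + 1/2 ∨
      h1 + h2 + h3 + h4 + 2 - μ = (h1 + h2 + h3 + h4 + l1 + l2 + l3 + l4) / 2 - 1/2) :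
    d2mm q h1 h2 h3 h4 l1 l2 l3 l4 t1 t2 t3 t4 μ = 0 := by
  have hL : l1 + l2 + l3 + l4 - 2 + μ
      = 2 * ((h1 + h2 + h3 + h4 + l1 + l2 + l3 + l4) / 2) - (h1 + h2 + h3 + h4 + 2 - μ) := by
    ring
  rw [d2mm, hL, qp_add_qp_two_mul_sub hq hμ, sub_self, zero_mul, zero_mul, zero_mul, zero_mul]

theorem d2m_eq_zero_of_exponent {μ : ℝ}
    (hμ : h1 + h2 + h3 + h4 + 3/2 - μ = (h1 + h2 + h3 + h4 + l1 + l2 + l3 + l4) / 2) :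
    d2m q h1 h2 h3 h4 l1 l2 l3 l4 t1 t2 t3 t4 μ = 0 := by
  have hL : l1 + l2 + l3 + l4 - 3/2 + μ = (h1 + h2 + h3 + h4 + l1 + l2 + l3 + l4) / 2 := by
    linarith
  rw [d2m, hμ, hL]
  ring

end

theorem stmt7_general (q h1 h2 h3 h4 l1 l2 l3 l4 : ℝ) (hq : 0 < q)
    (t1 t2 t3 t4 : ℂ) :
    d2mm q h1 h2 h3 h4 l1 l2 l3 l4 t1 t2 t3 t4
        ((h1 + h2 + h3 + h4 - l1 - l2 - l3 - l4 + 3) / 2) = 0 ∧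
    d2mm q h1 h2 h3 h4 l1 l2 l3 l4 t1 t2 t3 t4
        ((h1 + h2 + h3 + h4 - l1 - l2 - l3 - l4 + 3) / 2 + 1) = 0 ∧
    d2m q h1 h2 h3 h4 l1 l2 l3 l4 t1 t2 t3 t4
        ((h1 + h2 + h3 + h4 - l1 - l2 - l3 - l4 + 3) / 2) = 0 :=
  ⟨d2mm_eq_zero_of_exponent hq (.inl (by ring)),
    d2mm_eq_zero_of_exponent hq (.inr (by ring)),
    d2m_eq_zero_of_exponent (by ring)⟩

theorem stmt7 (q h1 h2 h3 h4 l1 l2 l3 l4 : ℝ) (hq : 0 < q) (hq1 : q ≠ 1)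
    (t1 t2 t3 t4 : ℂ) (ht1 : t1 ≠ 0) (ht2 : t2 ≠ 0) (ht3 : t3 ≠ 0) (ht4 : t4 ≠ 0) :
    d2mm q h1 h2 h3 h4 l1 l2 l3 l4 t1 t2 t3 t4
        ((h1 + h2 + h3 + h4 - l1 - l2 - l3 - l4 + 3) / 2) = 0 ∧
    d2mm q h1 h2 h3 h4 l1 l2 l3 l4 t1 t2 t3 t4
        ((h1 + h2 + h3 + h4 - l1 - l2 - l3 - l4 + 3) / 2 + 1) = 0 ∧
    d2m q h1 h2 h3 h4 l1 l2 l3 l4 t1 t2 t3 t4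
        ((h1 + h2 + h3 + h4 - l1 - l2 - l3 - l4 + 3) / 2) = 0 :=
  stmt7_general q h1 h2 h3 h4 l1 l2 l3 l4 hq t1 t2 t3 t4
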